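/- Let Y ⊆ ℝ^m be finite and nonempty and Z ~ N(0, I_m). For every θ, the gradient ∇F(θ) = E[argmax_{y ∈ Y}(θ+Z)ᵀy] lies in the convex hull of Y; consequently the gradient of the perturbed loss, ∇L(θ) = ∇F(θ) − y*, lies in conv(Y) − y*. -/

import Mathlib

open scoped RealInnerProductSpace
open MeasureTheory

/-- `Z` is a standard Gaussian random vector in `ℝ^m`: its coordinates are independent
and each is distributed as `N(0,1)`. -/
def IsStdGaussian {Ω : Type*} [MeasurableSpace Ω] (μ : Measure Ω) {m : ℕ}
    (Z : Ω → EuclideanSpace ℝ (Fin m)) : Prop :=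
  (∀ i, Measure.map (fun ω => Z ω i) μ = ProbabilityTheory.gaussianReal 0 1) ∧
    ProbabilityTheory.iIndepFun
      (fun i ω => Z ω i) μ

/-! The map `φ w = max_{y ∈ Y} ⟪w, y⟫` is Lipschitz with constant `max_{y ∈ Y} ‖y‖`, and near a
point `w` at which the maximiser `y₀` is unique it coincides with `⟪·, y₀⟫`, so `∇φ w = y₀`.
For a standard Gaussian `Z`, a tie `⟪θ + Z, y⟫ = ⟪θ + Z, y'⟫` with `y ≠ y'` puts the real
Gaussian `⟪Z, y - y'⟫`, of variance `‖y - y'‖²`, at a single value, so almost surely there is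
no tie. Differentiating under the integral, with the Lipschitz constant as dominating bound,
gives `∇F θ = E[g (θ + Z)]`, an average of points of `Y`, hence a point of the closed convex
set `conv Y`. -/

open ProbabilityTheory Filter Topology

theorem HasGradientAt.sub {𝕜 F : Type*} [RCLike 𝕜] [NormedAddCommGroup F]
    [InnerProductSpace 𝕜 F] [CompleteSpace F] {f g : F → 𝕜} {f' g' x : F}
    (hf : HasGradientAt f f' x) (hg : HasGradientAt g g' x) :
    HasGradientAt (fun y => f y - g y) (f' - g') x := by
  rw [hasGradientAt_iff_hasFDerivAt, map_sub]
  exact hf.hasFDerivAt.sub hg.hasFDerivAt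

theorem Measurable.integrable_comp_of_mem_finset {α F Ω : Type*} [MeasurableSpace α]
    [NormedAddCommGroup F] [MeasurableSpace F] [OpensMeasurableSpace F]
    [SecondCountableTopology F] [MeasurableSpace Ω] {μ : Measure Ω} [IsFiniteMeasure μ]
    {Y : Finset F} {g : α → F} (hg : Measurable g) (hgY : ∀ z, g z ∈ Y) {f : Ω → α}
    (hf : AEMeasurable f μ) : Integrable (fun ω => g (f ω)) μ :=
  .of_bound (hg.comp_aemeasurable hf).aestronglyMeasurable ((Y.sup (‖·‖₊) : NNReal) : ℝ)
    (.of_forall fun ω => NNReal.coe_le_coe.2 (Finset.le_sup (f := (‖·‖₊)) (hgY (f ω))))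

section InnerSup

variable {E : Type*} [NormedAddCommGroup E] [InnerProductSpace ℝ E]

theorem hasGradientAt_inner_const_right [CompleteSpace E] (y z : E) :
    HasGradientAt (fun w => ⟪w, y⟫) y z := by
  rw [hasGradientAt_iff_hasFDerivAt]
  refine (InnerProductSpace.toDual ℝ E y).hasFDerivAt.congr_of_eventuallyEq
    (.of_forall fun w => ?_)
  rw [InnerProductSpace.toDual_apply_apply, real_inner_comm]

namespace Finset

theorem lipschitzWith_sup'_inner (Y : Finset E) (hY : Y.Nonempty) :
    LipschitzWith (Y.sup' hY (‖·‖₊)) fun w => Y.sup' hY fun y => ⟪w, y⟫ := by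
  refine LipschitzWith.of_le_add_mul _ fun w w' => sup'_le _ _ fun y hy => ?_
  have hy_norm : ‖y‖ ≤ ((Y.sup' hY (‖·‖₊) : NNReal) : ℝ) :=
    NNReal.coe_le_coe.2 (le_sup' (‖·‖₊) hy)
  calc ⟪w, y⟫ = ⟪w', y⟫ + ⟪w - w', y⟫ := by rw [inner_sub_left]; ring
    _ ≤ Y.sup' hY (fun y => ⟪w', y⟫) + Y.sup' hY (‖·‖₊) * dist w w' := by
      gcongr
      · exact le_sup' (fun y => ⟪w', y⟫) hy
      · rw [dist_eq_norm, mul_comm]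
        exact (real_inner_le_norm _ _).trans (mul_le_mul_of_nonneg_left hy_norm (norm_nonneg _))

theorem sup'_inner_eventuallyEq_of_injOn {Y : Finset E} (hY : Y.Nonempty) {y₀ z : E}
    (hy₀ : y₀ ∈ Y) (hmax : ∀ y ∈ Y, ⟪z, y⟫ ≤ ⟪z, y₀⟫)
    (hinj : Set.InjOn (fun y => ⟪z, y⟫) Y) :
    (fun w => Y.sup' hY fun y => ⟪w, y⟫) =ᶠ[𝓝 z] fun w => ⟪w, y₀⟫ := by
  have hstrict : ∀ᶠ w in 𝓝 z, ∀ y ∈ Y, y ≠ y₀ → ⟪w, y⟫ < ⟪w, y₀⟫ := by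
    refine (eventually_all_finset Y).2 fun y hy => ?_
    by_cases h : y = y₀
    · exact .of_forall fun _ hne => absurd h hne
    have hlt : z ∈ {w | ⟪w, y⟫ < ⟪w, y₀⟫} :=
      (hmax y hy).lt_of_ne fun heq => h (hinj hy hy₀ heq)
    filter_upwards [(isOpen_lt (continuous_id.inner continuous_const)
      (continuous_id.inner continuous_const)).mem_nhds hlt] with w hw _
    exact hw
  filter_upwards [hstrict] with w hw
  refine le_antisymm (sup'_le _ _ fun y hy => ?_) (le_sup' (fun y => ⟪w, y⟫) hy₀)
  rcases eq_or_ne y y₀ with rfl | h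
  · exact le_rfl
  · exact (hw y hy h).le

theorem hasGradientAt_sup'_inner_of_injOn [CompleteSpace E] {Y : Finset E} (hY : Y.Nonempty)
    {y₀ z : E} (hy₀ : y₀ ∈ Y) (hmax : ∀ y ∈ Y, ⟪z, y⟫ ≤ ⟪z, y₀⟫)
    (hinj : Set.InjOn (fun y => ⟪z, y⟫) Y) :
    HasGradientAt (fun w => Y.sup' hY fun y => ⟪w, y⟫) y₀ z :=
  (hasGradientAt_inner_const_right y₀ z).congr_of_eventuallyEq
    (sup'_inner_eventuallyEq_of_injOn hY hy₀ hmax hinj)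

end Finset

theorem hasGradientAt_integral_sup'_inner [CompleteSpace E] [MeasurableSpace E] [BorelSpace E]
    [SecondCountableTopology E] {Ω : Type*} [MeasurableSpace Ω] {μ : Measure Ω}
    [IsFiniteMeasure μ] {Y : Finset E} (hY : Y.Nonempty) {X : Ω → E} (hX : Integrable X μ)
    {g : E → E} (hgmeas : Measurable g) (hg : ∀ z, g z ∈ Y ∧ ∀ y ∈ Y, ⟪z, y⟫ ≤ ⟪z, g z⟫)
    {θ : E} (hinj : ∀ᵐ ω ∂μ, Set.InjOn (fun y => ⟪θ + X ω, y⟫) Y) :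
    HasGradientAt (fun θ' => ∫ ω, Y.sup' hY (fun y => ⟪θ' + X ω, y⟫) ∂μ)
      (∫ ω, g (θ + X ω) ∂μ) θ := by
  set φ : E → ℝ := fun w => Y.sup' hY fun y => ⟪w, y⟫
  set C := Y.sup' hY (‖·‖₊)
  have hφ : LipschitzWith C φ := Y.lipschitzWith_sup'_inner hY
  have hφ_le : ∀ w, ‖φ w‖ ≤ C * ‖w‖ := fun w => by simpa [φ] using hφ.dist_le_mul w 0
  have hgX : Integrable (fun ω => g (θ + X ω)) μ :=
    hgmeas.integrable_comp_of_mem_finset (fun z => (hg z).1) (hX.aemeasurable.const_add θ)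
  obtain ⟨-, hderiv⟩ := hasFDerivAt_integral_of_dominated_loc_of_lip
    (F := fun θ' ω => φ (θ' + X ω)) (F' := fun ω => innerSL ℝ (g (θ + X ω)))
    (bound := fun _ => (C : ℝ)) univ_mem
    (.of_forall fun θ' => hφ.continuous.comp_aestronglyMeasurable
      (hX.aestronglyMeasurable.const_add θ'))
    ((((integrable_const θ).add hX).norm.const_mul C).mono'
      (hφ.continuous.comp_aestronglyMeasurable (hX.aestronglyMeasurable.const_add θ))
      (.of_forall fun ω => hφ_le _))
    ((innerSL ℝ).continuous.comp_aestronglyMeasurable hgX.aestronglyMeasurable)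
    (.of_forall fun ω => by
      simpa using LipschitzWith.of_dist_le_mul fun x y => by
        simpa [dist_add_right] using hφ.dist_le_mul (x + X ω) (y + X ω))
    (integrable_const _)
    (hinj.mono fun ω hω => by
      have hφω := (Y.hasGradientAt_sup'_inner_of_injOn hY (hg _).1 (hg _).2 hω).hasFDerivAt
      exact hφω.comp θ ((hasFDerivAt_id θ).add_const (X ω)))
  rw [hasGradientAt_iff_hasFDerivAt]
  refine hderiv.congr_fderiv ?_
  rw [(innerSL ℝ).integral_comp_comm hgX]
  ext v
  exact innerSL_apply_apply ℝ _ _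

end InnerSup

section StdGaussian

variable {E : Type*} [NormedAddCommGroup E] [InnerProductSpace ℝ E] [FiniteDimensional ℝ E]
  [MeasurableSpace E] [BorelSpace E]

theorem stdGaussian_map_innerSL (v : E) :
    (stdGaussian E).map (innerSL ℝ v) = gaussianReal 0 (‖v‖₊ ^ 2) := by
  rw [IsGaussian.map_eq_gaussianReal, integral_strongDual_stdGaussian, variance_dual_stdGaussian,
    innerSL_apply_norm]
  congr
  ext
  simp

theorem stdGaussian_inner_eq_null {v : E} (hv : v ≠ 0) (c : ℝ) :
    stdGaussian E {x | ⟪x, v⟫ = c} = 0 := by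
  have : NullSingletonClass (gaussianReal 0 (‖v‖₊ ^ 2)) :=
    nullSingletonClass_gaussianReal (pow_ne_zero 2 (nnnorm_ne_zero_iff.2 hv))
  have hset : {x | ⟪x, v⟫ = c} = innerSL ℝ v ⁻¹' {c} := by
    ext x
    simp [real_inner_comm]
  rw [hset, ← Measure.map_apply (by fun_prop) (measurableSet_singleton c),
    stdGaussian_map_innerSL]
  exact measure_singleton c

theorem ae_injOn_inner_stdGaussian (Y : Finset E) (θ : E) :
    ∀ᵐ x ∂stdGaussian E, Set.InjOn (fun y => ⟪θ + x, y⟫) Y := by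
  have hpair : ∀ y ∈ Y, ∀ y' ∈ Y,
      ∀ᵐ x ∂stdGaussian E, ⟪θ + x, y⟫ = ⟪θ + x, y'⟫ → y = y' := by
    intro y _ y' _
    rcases eq_or_ne y y' with rfl | hne
    · exact .of_forall fun _ _ => rfl
    refine ae_iff.2 <| measure_mono_null (fun x hx => ?_)
      (stdGaussian_inner_eq_null (sub_ne_zero.2 hne) ⟪θ, y' - y⟫)
    simp only [Set.mem_ofPred_eq, Classical.not_imp, inner_add_left, inner_sub_right] at hx ⊢
    linarith [hx.1]
  filter_upwards [(eventually_all_finset Y).2 fun y hy =>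
    (eventually_all_finset Y).2 (hpair y hy)] with x hx y hy y' hy' h
  exact hx y hy y' hy' h

end StdGaussian

namespace IsStdGaussian

variable {Ω : Type*} [MeasurableSpace Ω] {μ : Measure Ω} [IsProbabilityMeasure μ] {m : ℕ}
  {Z : Ω → EuclideanSpace ℝ (Fin m)}

theorem map_eq_stdGaussian (hZmeas : Measurable Z) (hZ : IsStdGaussian μ Z) :
    μ.map Z = stdGaussian (EuclideanSpace ℝ (Fin m)) := by
  have hcoord : ∀ i, Measurable fun ω => Z ω i := fun i => by fun_prop
  have hpi : μ.map (fun ω i => Z ω i) = Measure.pi fun _ => gaussianReal 0 1 := by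
    rw [(iIndepFun_iff_map_fun_eq_pi_map fun i => (hcoord i).aemeasurable).1 hZ.2]
    simp_rw [hZ.1]
  rw [← map_pi_eq_stdGaussian, ← hpi, Measure.map_map (by fun_prop) (by fun_prop)]
  rfl

theorem integrable (hZmeas : Measurable Z) (hZ : IsStdGaussian μ Z) : Integrable Z μ := by
  have h : Integrable id (μ.map Z) := hZ.map_eq_stdGaussian hZmeas ▸ IsGaussian.integrable_id
  exact (integrable_map_measure aestronglyMeasurable_id hZmeas.aemeasurable).1 h

end IsStdGaussian

theorem smoothed_gradient_mem_convexHull_general {m : ℕ} {Ω : Type*} [MeasurableSpace Ω]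
    (μ : Measure Ω) [IsProbabilityMeasure μ]
    (Y : Finset (EuclideanSpace ℝ (Fin m))) (hY : Y.Nonempty)
    (ystar : EuclideanSpace ℝ (Fin m))
    (Z : Ω → EuclideanSpace ℝ (Fin m)) (hZmeas : Measurable Z)
    (hZ : IsStdGaussian μ Z)
    (g : EuclideanSpace ℝ (Fin m) → EuclideanSpace ℝ (Fin m))
    (hgmeas : Measurable g)
    (hg : ∀ z, g z ∈ Y ∧ ∀ y ∈ Y, ⟪z, y⟫ ≤ ⟪z, g z⟫) :
    ∀ θ : EuclideanSpace ℝ (Fin m),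
      gradient (fun θ' : EuclideanSpace ℝ (Fin m) =>
          ∫ ω, Y.sup' hY (fun y => ⟪θ' + Z ω, y⟫) ∂μ) θ = ∫ ω, g (θ + Z ω) ∂μ ∧
      gradient (fun θ' : EuclideanSpace ℝ (Fin m) =>
          ∫ ω, Y.sup' hY (fun y => ⟪θ' + Z ω, y⟫) ∂μ) θ
        ∈ convexHull ℝ (Y : Set (EuclideanSpace ℝ (Fin m))) ∧
      gradient (fun θ' : EuclideanSpace ℝ (Fin m) =>
          (∫ ω, Y.sup' hY (fun y => ⟪θ' + Z ω, y⟫) ∂μ) - ⟪θ', ystar⟫) θ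
        ∈ (fun c => c - ystar) '' convexHull ℝ (Y : Set (EuclideanSpace ℝ (Fin m))) := by
  intro θ
  have hinj : ∀ᵐ ω ∂μ, Set.InjOn (fun y => ⟪θ + Z ω, y⟫) Y :=
    ae_of_ae_map hZmeas.aemeasurable <|
      hZ.map_eq_stdGaussian hZmeas ▸ ae_injOn_inner_stdGaussian Y θ
  have hgrad := hasGradientAt_integral_sup'_inner hY (hZ.integrable hZmeas) hgmeas hg hinj
  have hmem : ∫ ω, g (θ + Z ω) ∂μ ∈ convexHull ℝ (Y : Set (EuclideanSpace ℝ (Fin m))) :=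
    (convex_convexHull ℝ _).integral_mem (Y.finite_toSet.isCompact_convexHull ℝ).isClosed
      (.of_forall fun ω => subset_convexHull ℝ _ (hg _).1)
      (hgmeas.integrable_comp_of_mem_finset (fun z => (hg z).1) (hZmeas.const_add θ).aemeasurable)
  refine ⟨hgrad.gradient, hgrad.gradient ▸ hmem, _, hmem, ?_⟩
  exact (hgrad.sub (hasGradientAt_inner_const_right ystar θ)).gradient.symm

/-- The gradient `∇F(θ) = E[argmax_{y ∈ Y}(θ+Z)ᵀy]` of the Gaussian-smoothed maximum
lies in the convex hull of `Y`; consequently the gradient of the perturbed loss,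
`∇L(θ) = ∇F(θ) − y*`, lies in `conv(Y) − y*`. -/
theorem smoothed_gradient_mem_convexHull {m : ℕ} {Ω : Type*} [MeasurableSpace Ω]
    (μ : Measure Ω) [IsProbabilityMeasure μ]
    (Y : Finset (EuclideanSpace ℝ (Fin m))) (hY : Y.Nonempty)
    (ystar : EuclideanSpace ℝ (Fin m)) (hystar : ystar ∈ Y)
    (Z : Ω → EuclideanSpace ℝ (Fin m)) (hZmeas : Measurable Z)
    (hZ : IsStdGaussian μ Z)
    (g : EuclideanSpace ℝ (Fin m) → EuclideanSpace ℝ (Fin m))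
    (hgmeas : Measurable g)
    (hg : ∀ z, g z ∈ Y ∧ ∀ y ∈ Y, ⟪z, y⟫ ≤ ⟪z, g z⟫) :
    ∀ θ : EuclideanSpace ℝ (Fin m),
      gradient (fun θ' : EuclideanSpace ℝ (Fin m) =>
          ∫ ω, Y.sup' hY (fun y => ⟪θ' + Z ω, y⟫) ∂μ) θ = ∫ ω, g (θ + Z ω) ∂μ ∧
      gradient (fun θ' : EuclideanSpace ℝ (Fin m) =>
          ∫ ω, Y.sup' hY (fun y => ⟪θ' + Z ω, y⟫) ∂μ) θ
        ∈ convexHull ℝ (Y : Set (EuclideanSpace ℝ (Fin m))) ∧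
      gradient (fun θ' : EuclideanSpace ℝ (Fin m) =>
          (∫ ω, Y.sup' hY (fun y => ⟪θ' + Z ω, y⟫) ∂μ) - ⟪θ', ystar⟫) θ
        ∈ (fun c => c - ystar) '' convexHull ℝ (Y : Set (EuclideanSpace ℝ (Fin m))) :=
  smoothed_gradient_mem_convexHull_general μ Y hY ystar Z hZmeas hZ g hgmeas hg
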